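/- Let φ > 0, ξ > 0 and χ be real numbers, define Λ(x) = φ / (1 + exp(−ξ(x − χ))), Ω = 1 / (1 + exp(ξ χ)), and Ξ(Γ) = χ − (1/ξ) · ln((φ − Γ)/Γ) for 0 < Γ < φ. Let Γ be a real number and set Γ̃ = (1 − Ω) Γ + φ Ω, and assume 0 < Γ̃ < φ. Then for every real Q, the harvested-energy constraint (Λ(Q) − φ Ω)/(1 − Ω) ≥ Γ holds if and only if Q ≥ Ξ(Γ̃). -/
import Mathlib


/-- Equivalence between the harvested-energy QoS constraint `(Λ(Q) − φΩ)/(1 − Ω) ≥ Γ` and the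
received-RF-energy constraint `Q ≥ Ξ(Γ̃)`, where `Γ̃ = (1 − Ω)Γ + φΩ ∈ (0, φ)`. -/
theorem nleh_constraint_equivalence
    (φ ξ χ : ℝ) (hφ : 0 < φ) (hξ : 0 < ξ)
    (Λ Ξ : ℝ → ℝ)
    (hΛ : ∀ x, Λ x = φ / (1 + Real.exp (-ξ * (x - χ))))
    (hΞ : ∀ Γ, Ξ Γ = χ - (1/ξ) * Real.log ((φ - Γ)/Γ))
    (Ω : ℝ) (hΩ : Ω = 1 / (1 + Real.exp (ξ * χ)))
    (Γ Γt : ℝ) (hΓt : Γt = (1 - Ω) * Γ + φ * Ω)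
    (hΓt0 : 0 < Γt) (hΓtφ : Γt < φ) :
    ∀ Q : ℝ, (Λ Q - φ * Ω) / (1 - Ω) ≥ Γ ↔ Q ≥ Ξ Γt := by
  intro Q
  have hexχ : 0 < Real.exp (ξ * χ) := Real.exp_pos _
  have hΩ0 : 0 < Ω := by rw [hΩ]; positivity
  have hΩ1 : Ω < 1 := by
    rw [hΩ]
    rw [div_lt_one (by positivity)]
    linarith
  have h1Ω : 0 < 1 - Ω := by linarith
  have hE : 0 < Real.exp (-ξ * (Q - χ)) := Real.exp_pos _
  set E := Real.exp (-ξ * (Q - χ)) with hEdef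
  have hden : 0 < 1 + E := by linarith
  have hratio : 0 < (φ - Γt) / Γt := div_pos (by linarith) hΓt0
  -- step 1: constraint iff Λ Q ≥ Γt
  have step1 : (Λ Q - φ * Ω) / (1 - Ω) ≥ Γ ↔ Λ Q ≥ Γt := by
    rw [ge_iff_le, le_div_iff₀ h1Ω, hΓt]
    constructor <;> intro h <;> linarith
  -- step 2: Λ Q ≥ Γt iff E ≤ (φ - Γt)/Γt
  have step2 : Λ Q ≥ Γt ↔ E ≤ (φ - Γt) / Γt := by
    rw [hΛ, ge_iff_le, le_div_iff₀ hden, le_div_iff₀ hΓt0]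
    constructor <;> intro h <;> nlinarith
  -- step 3: E ≤ (φ - Γt)/Γt iff Q ≥ Ξ Γt
  have step3 : E ≤ (φ - Γt) / Γt ↔ Q ≥ Ξ Γt := by
    rw [← Real.log_le_log_iff hE hratio, hEdef, Real.log_exp, hΞ, ge_iff_le]
    have key : χ - 1/ξ * Real.log ((φ - Γt)/Γt) ≤ Q ↔
        (χ - Q) * ξ ≤ Real.log ((φ - Γt)/Γt) := by
      rw [one_div, inv_mul_eq_div, sub_le_iff_le_add, ← sub_le_iff_le_add',
        le_div_iff₀ hξ]
    constructor <;> intro h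
    · rw [key]; linarith
    · rw [key] at h; linarith
  rw [step1, step2, step3]
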